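/- Asymptotic strict efficiency of learned conditional thresholds (Theorem 3, strict part): Assume (A1)–(A4), fix α ∈ (0,1), and let 𝓧, ψ, X, λ*, (λ̂_N), and λ̄ be as follows: 𝓧 is a measurable space, ψ : 𝓧 → ℝ measurable, X a random element of 𝓧 on (Ω₂, P₂), λ*(x) := F_{ψ(x)}^{-1}(1−α), for each N the map λ̂_N : Ω₁ × 𝓧 → [0,1] is jointly measurable on a probability space (Ω₁, P₁) independent of X with sup_{x ∈ 𝓧} |λ̂_N(ω₁, x) − λ*(x)| → 0 in P₁-probability, and λ̄ ∈ [0,1] satisfies E[F_{ψ(X)}(λ̄)] = 1−α. If, in addition, for (law of ψ(X))-almost every t the map u ↦ C_t(u) is strictly convex on (0,1) and P(λ*(X) ≠ λ̄) > 0, then lim_{N→∞} E[G_{ψ(X)}(λ̂_N(X))] < E[G_{ψ(X)}(λ̄)]. -/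

import Mathlib

open MeasureTheory Set Filter

open scoped Classical Topology

/-- Generalized inverse `F_t⁻¹(u) := inf {λ ∈ [0,1] : F t λ ≥ u}`, with the
convention that the infimum of the empty set is `1`. -/
noncomputable def genInv (F : ℝ → ℝ → ℝ) (t u : ℝ) : ℝ :=
  if ({l : ℝ | l ∈ Set.Icc (0 : ℝ) 1 ∧ u ≤ F t l}).Nonempty then
    sInf {l : ℝ | l ∈ Set.Icc (0 : ℝ) 1 ∧ u ≤ F t l}
  else 1

/-- `C_t(u) := G_t(F_t⁻¹(u))`. -/
noncomputable def accFrac (F G : ℝ → ℝ → ℝ) (t u : ℝ) : ℝ :=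
  G t (genInv F t u)

open scoped ENNReal


lemma genInv_eq_self {F : ℝ → ℝ → ℝ} {t u l : ℝ}
    (hmono : StrictMonoOn (F t) (Icc 0 1)) (hl : l ∈ Icc (0:ℝ) 1) (hFl : F t l = u) :
    genInv F t u = l := by
  have hlb : ∀ m ∈ {l : ℝ | l ∈ Set.Icc (0 : ℝ) 1 ∧ u ≤ F t l}, l ≤ m := by
    intro m hm
    by_contra hml
    push_neg at hml
    exact absurd (hFl ▸ hm.2) (not_le.2 (hmono hm.1 hl hml))
  have hne : ({l : ℝ | l ∈ Set.Icc (0 : ℝ) 1 ∧ u ≤ F t l}).Nonempty := ⟨l, hl, hFl.ge⟩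
  rw [genInv, if_pos hne]
  exact le_antisymm (csInf_le ⟨0, fun m hm => hm.1.1⟩ ⟨hl, hFl.ge⟩) (le_csInf hne hlb)

lemma genInv_mem_Icc (F : ℝ → ℝ → ℝ) (t u : ℝ) : genInv F t u ∈ Icc (0:ℝ) 1 := by
  rw [genInv]
  split_ifs with h
  · obtain ⟨l, hl⟩ := h
    exact ⟨le_csInf ⟨l, hl⟩ fun m hm => hm.1.1,
      (csInf_le ⟨0, fun m hm => hm.1.1⟩ hl).trans hl.1.2⟩
  · exact ⟨zero_le_one, le_rfl⟩

lemma convex_support_line {f : ℝ → ℝ} (hf : ConvexOn ℝ (Icc 0 1) f) {u v : ℝ}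
    (hu : u ∈ Ioo (0:ℝ) 1) (hd : DifferentiableAt ℝ f u) (hv : v ∈ Icc (0:ℝ) 1) :
    f u + deriv f u * (v - u) ≤ f v := by
  have huI : u ∈ Icc (0:ℝ) 1 := Ioo_subset_Icc_self hu
  rcases lt_trichotomy u v with h | h | h
  · have hs := hf.deriv_le_slope huI hv h hd
    rw [slope_def_field] at hs
    have hvu : 0 < v - u := sub_pos.2 h
    have := (le_div_iff₀ hvu).mp hs
    linarith
  · subst h; simp
  · have hs := hf.slope_le_deriv hv huI h hd
    rw [slope_def_field] at hs
    have huv : 0 < u - v := sub_pos.2 h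
    have := (div_le_iff₀ huv).mp hs
    nlinarith

lemma strict_support_line {f : ℝ → ℝ} (hf : ConvexOn ℝ (Icc 0 1) f)
    (hsf : StrictConvexOn ℝ (Ioo 0 1) f) {u v : ℝ}
    (hu : u ∈ Ioo (0:ℝ) 1) (hd : DifferentiableAt ℝ f u) (hv : v ∈ Icc (0:ℝ) 1)
    (hne : v ≠ u) : f u + deriv f u * (v - u) < f v := by
  have huI : u ∈ Icc (0:ℝ) 1 := Ioo_subset_Icc_self hu
  rcases hne.lt_or_gt with h | h
  · -- v < u
    set w := (u + v)/2 with hw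
    have hvw : v < w := by rw [hw]; linarith
    have hwu : w < u := by rw [hw]; linarith
    have hwo : w ∈ Ioo (0:ℝ) 1 := ⟨by rw [hw]; nlinarith [hv.1, hu.1], by nlinarith [hv.2, hu.2]⟩
    have h1 : slope f w u < deriv f u := hsf.slope_lt_deriv hwo hu hwu hd
    have h2 : slope f u v ≤ slope f u w :=
      hf.slope_mono huI ⟨hv, by simp [h.ne]⟩ ⟨Ioo_subset_Icc_self hwo, by simp [hwu.ne]⟩ hvw.le
    rw [slope_comm] at h1
    have h3 : slope f u v < deriv f u := lt_of_le_of_lt h2 h1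
    rw [slope_def_field] at h3
    have hneg : v - u < 0 := sub_neg.2 h
    have := (div_lt_iff_of_neg hneg).mp h3
    linarith
  · -- u < v
    set w := (u + v)/2 with hw
    have huw : u < w := by rw [hw]; linarith
    have hwv : w < v := by rw [hw]; linarith
    have hwo : w ∈ Ioo (0:ℝ) 1 := ⟨by nlinarith [hu.1, hv.1], by nlinarith [hu.2, hv.2]⟩
    have h1 : deriv f u < slope f u w := hsf.deriv_lt_slope hu hwo huw hd
    have h2 : slope f u w ≤ slope f u v :=
      hf.slope_mono huI ⟨Ioo_subset_Icc_self hwo, by simp [huw.ne']⟩ ⟨hv, by simp [h.ne']⟩ hwv.le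
    have h3 : deriv f u < slope f u v := lt_of_lt_of_le h1 h2
    rw [slope_def_field] at h3
    have hpos : 0 < v - u := sub_pos.2 h
    have := (lt_div_iff₀ hpos).mp h3
    linarith

lemma deriv_abs_bound {f : ℝ → ℝ} (hf : ConvexOn ℝ (Icc 0 1) f)
    (hr : ∀ v ∈ Icc (0:ℝ) 1, f v ∈ Icc (0:ℝ) 1) {u : ℝ} (hu : u ∈ Ioo (0:ℝ) 1)
    (hd : DifferentiableAt ℝ f u) : |deriv f u| ≤ max (1/u) (1/(1-u)) := by
  have huI : u ∈ Icc (0:ℝ) 1 := Ioo_subset_Icc_self hu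
  have h0 : (0:ℝ) ∈ Icc (0:ℝ) 1 := left_mem_Icc.2 zero_le_one
  have h1 : (1:ℝ) ∈ Icc (0:ℝ) 1 := right_mem_Icc.2 zero_le_one
  have hfu := hr u huI
  have hf0 := hr 0 h0
  have hf1 := hr 1 h1
  have h1u : 0 < 1 - u := sub_pos.2 hu.2
  have hup : deriv f u ≤ 1/(1-u) := by
    have hs := hf.deriv_le_slope huI h1 hu.2 hd
    rw [slope_def_field] at hs
    exact hs.trans ((div_le_div_iff_of_pos_right h1u).mpr (by linarith [hfu.1, hf1.2]))
  have hlow : -(1/u) ≤ deriv f u := by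
    have hs := hf.slope_le_deriv h0 huI hu.1 hd
    rw [slope_def_field] at hs
    refine le_trans ?_ hs
    rw [sub_zero, neg_div' ]
    exact (div_le_div_iff_of_pos_right hu.1).mpr (by linarith [hfu.1, hf0.2])
  rw [abs_le]
  exact ⟨le_trans (neg_le_neg (le_max_left _ _)) hlow, hup.trans (le_max_right _ _)⟩

lemma integrable_of_abs_le {Ω : Type*} [MeasurableSpace Ω] {μ : Measure Ω}
    [IsFiniteMeasure μ] {k : Ω → ℝ} (hk : AEStronglyMeasurable k μ) {C : ℝ}
    (hb : ∀ ω, |k ω| ≤ C) : Integrable k μ :=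
  (integrable_const C).mono' hk (Eventually.of_forall fun ω => by
    simpa [Real.norm_eq_abs] using hb ω)

lemma integral_mul_le_integral_mul {Ω : Type*} [MeasurableSpace Ω] (μ : Measure Ω)
    [IsProbabilityMeasure μ] {g h : Ω → ℝ} (hg : Measurable g) (hh : Measurable h)
    {Cg Ch : ℝ} (hgb : ∀ ω, |g ω| ≤ Cg) (hhb : ∀ ω, |h ω| ≤ Ch)
    (hmono : ∀ ω ω', 0 ≤ (g ω - g ω') * (h ω - h ω')) :
    (∫ ω, g ω ∂μ) * (∫ ω, h ω ∂μ) ≤ ∫ ω, g ω * h ω ∂μ := by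
  have hb : ∀ (a b : Ω), |g a * h b| ≤ Cg * Ch := fun a b => by
    rw [abs_mul]
    exact mul_le_mul (hgb a) (hhb b) (abs_nonneg _) ((abs_nonneg _).trans (hgb a))
  have i11 : Integrable (fun p : Ω × Ω => g p.1 * h p.1) (μ.prod μ) :=
    integrable_of_abs_le ((hg.comp measurable_fst).mul
      (hh.comp measurable_fst)).aestronglyMeasurable (fun p => hb p.1 p.1)
  have i12 : Integrable (fun p : Ω × Ω => g p.1 * h p.2) (μ.prod μ) :=
    integrable_of_abs_le ((hg.comp measurable_fst).mul
      (hh.comp measurable_snd)).aestronglyMeasurable (fun p => hb p.1 p.2)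
  have i21 : Integrable (fun p : Ω × Ω => g p.2 * h p.1) (μ.prod μ) :=
    integrable_of_abs_le ((hg.comp measurable_snd).mul
      (hh.comp measurable_fst)).aestronglyMeasurable (fun p => hb p.2 p.1)
  have i22 : Integrable (fun p : Ω × Ω => g p.2 * h p.2) (μ.prod μ) :=
    integrable_of_abs_le ((hg.comp measurable_snd).mul
      (hh.comp measurable_snd)).aestronglyMeasurable (fun p => hb p.2 p.2)
  have hnn : 0 ≤ ∫ p, (g p.1 - g p.2) * (h p.1 - h p.2) ∂(μ.prod μ) :=
    integral_nonneg fun p => hmono _ _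
  have hexp : (fun p : Ω × Ω => (g p.1 - g p.2) * (h p.1 - h p.2)) =
      fun p => g p.1 * h p.1 - g p.1 * h p.2 - g p.2 * h p.1 + g p.2 * h p.2 := by
    funext p; ring
  have i112 : Integrable (fun p : Ω × Ω => g p.1 * h p.1 - g p.1 * h p.2) (μ.prod μ) :=
    i11.sub i12
  have i1121 : Integrable (fun p : Ω × Ω =>
      g p.1 * h p.1 - g p.1 * h p.2 - g p.2 * h p.1) (μ.prod μ) := i112.sub i21
  rw [hexp, integral_add i1121 i22, integral_sub i112 i21, integral_sub i11 i12] at hnn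
  have hmapf : (μ.prod μ).map Prod.fst = μ := by
    rw [Measure.map_fst_prod]; simp
  have hmaps : (μ.prod μ).map Prod.snd = μ := by
    rw [Measure.map_snd_prod]; simp
  have e11 : ∫ p, g p.1 * h p.1 ∂(μ.prod μ) = ∫ ω, g ω * h ω ∂μ := by
    rw [← hmapf, integral_map measurable_fst.aemeasurable]
    rw [hmapf]
    exact (hg.mul hh).aestronglyMeasurable
  have e22 : ∫ p, g p.2 * h p.2 ∂(μ.prod μ) = ∫ ω, g ω * h ω ∂μ := by
    rw [← hmaps, integral_map measurable_snd.aemeasurable]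
    rw [hmaps]
    exact (hg.mul hh).aestronglyMeasurable
  have e12 : ∫ p, g p.1 * h p.2 ∂(μ.prod μ) = (∫ ω, g ω ∂μ) * ∫ ω, h ω ∂μ :=
    integral_prod_mul g h
  have e21 : ∫ p, g p.2 * h p.1 ∂(μ.prod μ) = (∫ ω, h ω ∂μ) * ∫ ω, g ω ∂μ := by
    have : (fun p : Ω × Ω => g p.2 * h p.1) = fun p => h p.1 * g p.2 := by
      funext p; ring
    rw [this]
    exact integral_prod_mul h g
  rw [e11, e22, e12, e21] at hnn
  nlinarith [hnn]

lemma integral_comp_snd {Ω₁ Ω₂ : Type*} [MeasurableSpace Ω₁] [MeasurableSpace Ω₂]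
    (μ : Measure Ω₁) [IsProbabilityMeasure μ] (ν : Measure Ω₂) [IsProbabilityMeasure ν]
    {q : Ω₂ → ℝ} (hq : AEStronglyMeasurable q ν) :
    ∫ p, q p.2 ∂(μ.prod ν) = ∫ ω, q ω ∂ν := by
  have hmap : (μ.prod ν).map Prod.snd = ν := by rw [Measure.map_snd_prod]; simp
  calc ∫ p, q p.2 ∂(μ.prod ν) = ∫ ω, q ω ∂((μ.prod ν).map Prod.snd) :=
        (integral_map measurable_snd.aemeasurable (by rwa [hmap])).symm
    _ = ∫ ω, q ω ∂ν := by rw [hmap]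

/-- **Asymptotic strict efficiency of learned conditional thresholds (Theorem 3, strict part).**
Under the assumptions of the limit part, if in addition `u ↦ C_t(u)` is strictly convex on
`(0,1)` for `law(ψ(X))`-a.e. `t` and `P(λ*(X) ≠ λ̄) > 0`, then
`lim_N E[G_{ψ(X)}(λ̂_N(X))] < E[G_{ψ(X)}(λ̄)]`. -/
theorem learned_threshold_asymptotic_strict_efficiency
    {𝓧 : Type*} [MeasurableSpace 𝓧]
    {Ω₁ Ω₂ : Type*} [MeasurableSpace Ω₁] [MeasurableSpace Ω₂]
    (P₁ : Measure Ω₁) [IsProbabilityMeasure P₁]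
    (P₂ : Measure Ω₂) [IsProbabilityMeasure P₂]
    (F G : ℝ → ℝ → ℝ)
    (hFrange : ∀ t : ℝ, ∀ l ∈ Icc (0 : ℝ) 1, F t l ∈ Icc (0 : ℝ) 1)
    (hGrange : ∀ t : ℝ, ∀ l ∈ Icc (0 : ℝ) 1, G t l ∈ Icc (0 : ℝ) 1)
    -- (A1)
    (hA1 : ∀ t : ℝ, ContinuousOn (F t) (Icc 0 1) ∧ StrictMonoOn (F t) (Icc 0 1) ∧
      F t 0 = 0 ∧ F t 1 = 1)
    -- (A2)
    (hA2 : ∀ l ∈ Icc (0 : ℝ) 1, Antitone fun t => F t l)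
    -- (A3)
    (hA3 : ∀ t : ℝ, ConvexOn ℝ (Icc 0 1) (accFrac F G t) ∧
      ∀ u ∈ Ioo (0 : ℝ) 1, DifferentiableAt ℝ (accFrac F G t) u)
    -- (A4)
    (hA4 : ∀ u ∈ Ioo (0 : ℝ) 1, Antitone fun t => deriv (accFrac F G t) u)
    (α : ℝ) (hα : α ∈ Ioo (0 : ℝ) 1)
    (ψ : 𝓧 → ℝ) (hψ : Measurable ψ)
    (X : Ω₂ → 𝓧) (hX : Measurable X)
    (lamHat : ℕ → Ω₁ × 𝓧 → ℝ)
    (hlamHatMeas : ∀ N, Measurable (lamHat N))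
    (hlamHatRange : ∀ N p, lamHat N p ∈ Icc (0 : ℝ) 1)
    -- uniform (over x) convergence in P₁-probability to the oracle threshold
    (hconv : ∀ ε > (0 : ℝ),
      Tendsto (fun N => P₁ {ω₁ | ∃ x : 𝓧, ε < |lamHat N (ω₁, x) - genInv F (ψ x) (1 - α)|})
        atTop (𝓝 0))
    (lamBar : ℝ) (hlamBar : lamBar ∈ Icc (0 : ℝ) 1)
    (hmean : ∫ ω₂, F (ψ (X ω₂)) lamBar ∂P₂ = 1 - α)
    (hint0 : Integrable (fun ω₂ => F (ψ (X ω₂)) lamBar) P₂)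
    (hintN : ∀ N, Integrable (fun p : Ω₁ × Ω₂ =>
      G (ψ (X p.2)) (lamHat N (p.1, X p.2))) (P₁.prod P₂))
    (hintStar : Integrable (fun ω₂ => G (ψ (X ω₂)) (genInv F (ψ (X ω₂)) (1 - α))) P₂)
    (hintBar : Integrable (fun ω₂ => G (ψ (X ω₂)) lamBar) P₂)
    -- strict convexity for (law of ψ(X))-a.e. t
    (hstrict : ∀ᵐ t ∂(P₂.map (fun ω₂ => ψ (X ω₂))),
      StrictConvexOn ℝ (Ioo (0 : ℝ) 1) (accFrac F G t))
    -- the oracle and marginal thresholds differ with positive probability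
    (hdiff : 0 < P₂ {ω₂ | genInv F (ψ (X ω₂)) (1 - α) ≠ lamBar}) :
    Tendsto (fun N => ∫ p, G (ψ (X p.2)) (lamHat N (p.1, X p.2)) ∂(P₁.prod P₂)) atTop
        (𝓝 (∫ ω₂, G (ψ (X ω₂)) (genInv F (ψ (X ω₂)) (1 - α)) ∂P₂)) ∧
      ∫ ω₂, G (ψ (X ω₂)) (genInv F (ψ (X ω₂)) (1 - α)) ∂P₂ <
        ∫ ω₂, G (ψ (X ω₂)) lamBar ∂P₂ := by
  obtain ⟨hα0, hα1⟩ := hα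
  set u₀ : ℝ := 1 - α with hu₀def
  have hu₀ : u₀ ∈ Ioo (0:ℝ) 1 := ⟨by rw [hu₀def]; linarith, by rw [hu₀def]; linarith⟩
  have hFstar : ∀ t : ℝ, F t (genInv F t u₀) = u₀ := by
    intro t
    obtain ⟨hc, hm, h0, h1⟩ := hA1 t
    have hmem : u₀ ∈ Icc (F t 0) (F t 1) := by
      rw [h0, h1]; exact ⟨hu₀.1.le, hu₀.2.le⟩
    obtain ⟨l, hlmem, hFl⟩ := intermediate_value_Icc zero_le_one hc hmem
    rw [genInv_eq_self hm hlmem hFl, hFl]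
  have hGinvF : ∀ t : ℝ, ∀ l ∈ Icc (0:ℝ) 1, genInv F t (F t l) = l := fun t l hl =>
    genInv_eq_self (hA1 t).2.1 hl rfl
  have hGeq : ∀ t : ℝ, ∀ l ∈ Icc (0:ℝ) 1, accFrac F G t (F t l) = G t l := by
    intro t l hl; rw [accFrac, hGinvF t l hl]
  have haccRange : ∀ t u : ℝ, accFrac F G t u ∈ Icc (0:ℝ) 1 := fun t u =>
    hGrange t _ (genInv_mem_Icc F t u)
  constructor
  · -- limit part
    rw [show (∫ ω₂, G (ψ (X ω₂)) (genInv F (ψ (X ω₂)) u₀) ∂P₂)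
        = ∫ p, G (ψ (X p.2)) (genInv F (ψ (X p.2)) u₀) ∂(P₁.prod P₂) from
      (integral_comp_snd P₁ P₂ hintStar.aestronglyMeasurable).symm]
    apply tendsto_of_subseq_tendsto
    intro ns hns
    have hextr : ∀ n : ℕ, ∀ᶠ k in atTop,
        P₁ {ω₁ | ∃ x : 𝓧, (1:ℝ)/(n+1) < |lamHat (ns k) (ω₁, x) - genInv F (ψ x) u₀|}
          ≤ (1/2 : ℝ≥0∞)^n := by
      intro n
      have hpos : (0:ℝ) < 1/(n+1) := by positivity
      have htend := (hconv (1/(n+1)) hpos).comp hns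
      have hhalf : (0 : ℝ≥0∞) < (1/2)^n := ENNReal.pow_pos (by norm_num) n
      exact htend.eventually_le_const hhalf
    obtain ⟨φ, hφmono, hφ⟩ := extraction_forall_of_eventually hextr
    refine ⟨φ, ?_⟩
    set B : ℕ → Set Ω₁ := fun j =>
      {ω₁ | ∃ x : 𝓧, (1:ℝ)/(j+1) < |lamHat (ns (φ j)) (ω₁, x) - genInv F (ψ x) u₀|} with hB
    have hsum : ∑' j, P₁ (B j) ≠ ⊤ := by
      refine ne_top_of_le_ne_top ?_ (ENNReal.tsum_le_tsum fun j => hφ j)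
      rw [ENNReal.tsum_geometric]
      simp only [ne_eq, ENNReal.inv_eq_top]
      norm_num
    have hnull : P₁ (limsup B atTop) = 0 := measure_limsup_atTop_eq_zero hsum
    have hae : ∀ᵐ p ∂(P₁.prod P₂),
        Tendsto (fun n => G (ψ (X p.2)) (lamHat (ns (φ n)) (p.1, X p.2))) atTop
          (𝓝 (G (ψ (X p.2)) (genInv F (ψ (X p.2)) u₀))) := by
      rw [ae_iff]
      refine measure_mono_null (fun p hp => ?_)
        (show (P₁.prod P₂) ((toMeasurable P₁ (limsup B atTop)) ×ˢ (univ : Set Ω₂)) = 0 by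
          rw [Measure.prod_prod, measure_toMeasurable, hnull, zero_mul])
      simp only [mem_setOf_eq] at hp
      rw [Set.mem_prod]
      refine ⟨subset_toMeasurable _ _ ?_, mem_univ _⟩
      by_contra hp1
      apply hp
      have hev : ∀ᶠ j in atTop, p.1 ∉ B j :=
        not_frequently.mp (fun hf => hp1 (mem_limsup_iff_frequently_mem.mpr hf))
      set t := ψ (X p.2) with ht
      set lst := genInv F t u₀ with hlst
      have hlstI : lst ∈ Icc (0:ℝ) 1 := genInv_mem_Icc F t u₀
      have hl : ∀ᶠ j in atTop, |lamHat (ns (φ j)) (p.1, X p.2) - lst| ≤ 1/(j+1) := by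
        filter_upwards [hev] with j hj
        simp only [hB, mem_setOf_eq, not_exists, not_lt] at hj
        exact hj (X p.2)
      have hlim0 : Tendsto (fun j => |lamHat (ns (φ j)) (p.1, X p.2) - lst|) atTop (𝓝 0) :=
        squeeze_zero' (Eventually.of_forall fun j => abs_nonneg _) hl
          tendsto_one_div_add_atTop_nhds_zero_nat
      have hltend : Tendsto (fun j => lamHat (ns (φ j)) (p.1, X p.2)) atTop (𝓝 lst) := by
        rw [tendsto_iff_dist_tendsto_zero]
        simpa [Real.dist_eq] using hlim0
      have hFt : Tendsto (fun j => F t (lamHat (ns (φ j)) (p.1, X p.2))) atTop (𝓝 u₀) := by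
        have hcw : ContinuousWithinAt (F t) (Icc 0 1) lst := (hA1 t).1 lst hlstI
        have hwithin : Tendsto (fun j => lamHat (ns (φ j)) (p.1, X p.2)) atTop
            (𝓝[Icc (0:ℝ) 1] lst) :=
          tendsto_nhdsWithin_of_tendsto_nhds_of_eventually_within _ hltend
            (Eventually.of_forall fun j => hlamHatRange _ _)
        have := hcw.tendsto.comp hwithin
        rwa [show F t lst = u₀ from hFstar t] at this
      have hC : Tendsto (fun j => accFrac F G t (F t (lamHat (ns (φ j)) (p.1, X p.2)))) atTop
          (𝓝 (accFrac F G t u₀)) :=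
        (((hA3 t).2 u₀ hu₀).continuousAt.tendsto).comp hFt
      exact hC.congr (fun j => hGeq t _ (hlamHatRange _ _))
    exact tendsto_integral_of_dominated_convergence (fun _ => (1:ℝ))
      (fun n => (hintN (ns (φ n))).aestronglyMeasurable) (integrable_const 1)
      (fun n => Eventually.of_forall fun p => by
        have hm := hGrange (ψ (X p.2)) _ (hlamHatRange (ns (φ n)) (p.1, X p.2))
        show ‖G (ψ (X p.2)) (lamHat (ns (φ n)) (p.1, X p.2))‖ ≤ (1:ℝ)
        rw [Real.norm_eq_abs, abs_le]
        exact ⟨by linarith [hm.1], hm.2⟩)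
      hae
  · -- strict part
    have hstrict' : ∀ᵐ ω₂ ∂P₂,
        StrictConvexOn ℝ (Ioo (0:ℝ) 1) (accFrac F G (ψ (X ω₂))) :=
      ae_of_ae_map (hψ.comp hX).aemeasurable hstrict
    set g : Ω₂ → ℝ := fun ω₂ => deriv (accFrac F G (ψ (X ω₂))) u₀ with hg
    have hgmeas : Measurable g := (hA4 u₀ hu₀).measurable.comp (hψ.comp hX)
    have hhmeas : Measurable (fun ω₂ => F (ψ (X ω₂)) lamBar) :=
      (hA2 lamBar hlamBar).measurable.comp (hψ.comp hX)
    set K : ℝ := max (1/u₀) (1/(1-u₀)) with hK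
    have hgb : ∀ ω₂, |g ω₂| ≤ K := fun ω₂ =>
      deriv_abs_bound (hA3 _).1 (fun v _ => haccRange _ v) hu₀ ((hA3 _).2 u₀ hu₀)
    have hFmem : ∀ ω₂, F (ψ (X ω₂)) lamBar ∈ Icc (0:ℝ) 1 := fun ω₂ =>
      hFrange _ lamBar hlamBar
    have hhb : ∀ ω₂, |F (ψ (X ω₂)) lamBar - u₀| ≤ 2 := by
      intro ω₂
      have hm := hFmem ω₂
      rw [abs_le]
      exact ⟨by linarith [hm.1, hu₀.2], by linarith [hm.2, hu₀.1]⟩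
    have hsupp : ∀ ω₂, G (ψ (X ω₂)) (genInv F (ψ (X ω₂)) u₀)
        + g ω₂ * (F (ψ (X ω₂)) lamBar - u₀) ≤ G (ψ (X ω₂)) lamBar := by
      intro ω₂
      have h := convex_support_line (hA3 (ψ (X ω₂))).1 hu₀ ((hA3 _).2 u₀ hu₀) (hFmem ω₂)
      rw [hGeq _ lamBar hlamBar] at h
      simpa only [accFrac] using h
    have hgh_int : Integrable (fun ω₂ => g ω₂ * (F (ψ (X ω₂)) lamBar - u₀)) P₂ :=
      integrable_of_abs_le (hgmeas.mul (hhmeas.sub measurable_const)).aestronglyMeasurable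
        (C := K * 2) (fun ω₂ => by
          rw [abs_mul]
          exact mul_le_mul (hgb ω₂) (hhb ω₂) (abs_nonneg _) ((abs_nonneg _).trans (hgb ω₂)))
    have hQint : Integrable (fun ω₂ => G (ψ (X ω₂)) lamBar
        - G (ψ (X ω₂)) (genInv F (ψ (X ω₂)) u₀)
        - g ω₂ * (F (ψ (X ω₂)) lamBar - u₀)) P₂ := (hintBar.sub hintStar).sub hgh_int
    have hQpos : 0 < ∫ ω₂, (G (ψ (X ω₂)) lamBar - G (ψ (X ω₂)) (genInv F (ψ (X ω₂)) u₀)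
        - g ω₂ * (F (ψ (X ω₂)) lamBar - u₀)) ∂P₂ := by
      rw [integral_pos_iff_support_of_nonneg_ae
        (Eventually.of_forall fun ω₂ => sub_nonneg.2 (by linarith [hsupp ω₂])) hQint]
      set E := {ω₂ | StrictConvexOn ℝ (Ioo (0:ℝ) 1) (accFrac F G (ψ (X ω₂)))} with hE
      have hEc : P₂ Eᶜ = 0 := by
        rw [hE, compl_setOf]
        exact ae_iff.mp hstrict'
      have hsub : {ω₂ | genInv F (ψ (X ω₂)) u₀ ≠ lamBar} ∩ E ⊆
          Function.support (fun ω₂ => G (ψ (X ω₂)) lamBar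
            - G (ψ (X ω₂)) (genInv F (ψ (X ω₂)) u₀)
            - g ω₂ * (F (ψ (X ω₂)) lamBar - u₀)) := by
        rintro ω₂ ⟨hne, hEmem⟩
        have hhne : F (ψ (X ω₂)) lamBar ≠ u₀ := by
          intro heq
          exact hne (by rw [← heq, hGinvF _ lamBar hlamBar])
        have hlt := strict_support_line (hA3 (ψ (X ω₂))).1 hEmem hu₀
          ((hA3 _).2 u₀ hu₀) (hFmem ω₂) hhne
        rw [hGeq _ lamBar hlamBar] at hlt
        simp only [accFrac] at hlt
        simp only [Function.mem_support]
        intro h0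
        rw [sub_sub, sub_eq_zero] at h0
        rw [h0] at hlt
        exact absurd hlt (by simp [hg])
      refine lt_of_lt_of_le ?_ (measure_mono hsub)
      by_contra hz
      push_neg at hz
      have hz0 : P₂ ({ω₂ | genInv F (ψ (X ω₂)) u₀ ≠ lamBar} ∩ E) = 0 := le_antisymm hz bot_le
      have hle : P₂ {ω₂ | genInv F (ψ (X ω₂)) u₀ ≠ lamBar} ≤
          P₂ ({ω₂ | genInv F (ψ (X ω₂)) u₀ ≠ lamBar} ∩ E) + P₂ Eᶜ := by
        refine (measure_mono ?_).trans (measure_union_le _ _)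
        intro ω₂ hmem
        by_cases hEx : ω₂ ∈ E
        · exact Or.inl ⟨hmem, hEx⟩
        · exact Or.inr hEx
      rw [hz0, hEc, add_zero] at hle
      exact absurd (le_antisymm hle bot_le) hdiff.ne'
    have hcov : 0 ≤ ∫ ω₂, g ω₂ * (F (ψ (X ω₂)) lamBar - u₀) ∂P₂ := by
      have hmono : ∀ ω ω', 0 ≤ (g ω - g ω') *
          ((F (ψ (X ω)) lamBar - u₀) - (F (ψ (X ω')) lamBar - u₀)) := by
        intro ω ω'
        have hg0 : Antitone (fun t => deriv (accFrac F G t) u₀) := hA4 u₀ hu₀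
        have hh0 : Antitone (fun t => F t lamBar) := hA2 lamBar hlamBar
        rcases le_total (ψ (X ω)) (ψ (X ω')) with hle | hle
        · have h1 : g ω' ≤ g ω := hg0 hle
          have h2 : F (ψ (X ω')) lamBar ≤ F (ψ (X ω)) lamBar := hh0 hle
          nlinarith
        · have h1 : g ω ≤ g ω' := hg0 hle
          have h2 : F (ψ (X ω)) lamBar ≤ F (ψ (X ω')) lamBar := hh0 hle
          nlinarith
      have hkey : (∫ ω₂, g ω₂ ∂P₂) * (∫ ω₂, (F (ψ (X ω₂)) lamBar - u₀) ∂P₂) ≤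
          ∫ ω₂, g ω₂ * (F (ψ (X ω₂)) lamBar - u₀) ∂P₂ := integral_mul_le_integral_mul P₂ hgmeas (hhmeas.sub measurable_const)
        hgb hhb hmono
      have hzero : ∫ ω₂, (F (ψ (X ω₂)) lamBar - u₀) ∂P₂ = 0 := by
        rw [integral_sub hint0 (integrable_const _), integral_const, hmean]
        simp
      rw [hzero, mul_zero] at hkey
      exact hkey
    have hsplit : ∫ ω₂, (G (ψ (X ω₂)) lamBar - G (ψ (X ω₂)) (genInv F (ψ (X ω₂)) u₀)
        - g ω₂ * (F (ψ (X ω₂)) lamBar - u₀)) ∂P₂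
        = (∫ ω₂, G (ψ (X ω₂)) lamBar ∂P₂)
          - (∫ ω₂, G (ψ (X ω₂)) (genInv F (ψ (X ω₂)) u₀) ∂P₂)
          - ∫ ω₂, g ω₂ * (F (ψ (X ω₂)) lamBar - u₀) ∂P₂ := by
      have hint1 : Integrable (fun ω₂ => G (ψ (X ω₂)) lamBar
          - G (ψ (X ω₂)) (genInv F (ψ (X ω₂)) u₀)) P₂ := hintBar.sub hintStar
      rw [integral_sub hint1 hgh_int, integral_sub hintBar hintStar]
    rw [hsplit] at hQpos
    linarith
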